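/- Let $(v, \sigma, \rho)$ be a smooth solution on $[t_0, T]$ of the transformed Nernst–Planck system $\partial_t\sigma + z^{-1}(v\cdot\nabla\sigma) = D\Delta\sigma + D\nabla\cdot(\rho\nabla\Phi)$, $\partial_t\rho + z^{-1}(v\cdot\nabla\rho) = D\Delta\rho + D\nabla\cdot(\sigma\nabla\Phi)$ on $\mathbb{T}^2$ with $-\varepsilon_0\Delta\Phi = \rho$, $v$ divergence-free, and $\sigma \ge 0$. Then $\frac{d}{dt}\bigl(\|\sigma(t)\|_{L^2}^2 + \|\rho(t)\|_{L^2}^2\bigr) + 2D\bigl(\|\nabla\sigma(t)\|_{L^2}^2 + \|\nabla\rho(t)\|_{L^2}^2\bigr) \le 0$ for all $t \in [t_0, T]$. -/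

import Mathlib

open MeasureTheory

noncomputable section

/-- The periodic box `[0,2π]²`. -/
def T2 : Set (Fin 2 → ℝ) := Set.Icc 0 (fun _ => 2 * Real.pi)

/-- First-order partial derivative `∂ᵢ f`. -/
def pd (i : Fin 2) (f : (Fin 2 → ℝ) → ℝ) (x : Fin 2 → ℝ) : ℝ :=
  fderiv ℝ f x (Pi.single i 1)

/-- Second-order partial derivative `∂ᵢ∂ᵢ f`. -/
def pd2 (i : Fin 2) (f : (Fin 2 → ℝ) → ℝ) (x : Fin 2 → ℝ) : ℝ :=
  fderiv ℝ (fun y => fderiv ℝ f y (Pi.single i 1)) x (Pi.single i 1)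

namespace NPaux

open Set

lemma T2_compact : IsCompact T2 := isCompact_Icc

lemma T2_meas : MeasurableSet T2 := measurableSet_Icc

lemma contDiff_pd {f : (Fin 2 → ℝ) → ℝ} (hf : ContDiff ℝ (⊤ : ℕ∞) f) (i : Fin 2) :
    ContDiff ℝ (⊤ : ℕ∞) (pd i f) :=
  (hf.fderiv_right (by simp)).clm_apply contDiff_const

lemma pd2_eq (i : Fin 2) (f : (Fin 2 → ℝ) → ℝ) : pd i (pd i f) = pd2 i f := rfl

lemma pd_add {f g : (Fin 2 → ℝ) → ℝ} {x : Fin 2 → ℝ} (hf : DifferentiableAt ℝ f x)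
    (hg : DifferentiableAt ℝ g x) (i : Fin 2) :
    pd i (fun y => f y + g y) x = pd i f x + pd i g x := by
  simp [pd, fderiv_fun_add hf hg]

lemma pd_mul {f g : (Fin 2 → ℝ) → ℝ} {x : Fin 2 → ℝ} (hf : DifferentiableAt ℝ f x)
    (hg : DifferentiableAt ℝ g x) (i : Fin 2) :
    pd i (fun y => f y * g y) x = pd i f x * g x + f x * pd i g x := by
  simp [pd, fderiv_fun_mul hf hg]; ring

lemma pd_const_mul {f : (Fin 2 → ℝ) → ℝ} {x : Fin 2 → ℝ} (hf : DifferentiableAt ℝ f x)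
    (c : ℝ) (i : Fin 2) :
    pd i (fun y => c * f y) x = c * pd i f x := by
  simp [pd, fderiv_const_mul hf]

lemma pd_sub {f g : (Fin 2 → ℝ) → ℝ} {x : Fin 2 → ℝ} (hf : DifferentiableAt ℝ f x)
    (hg : DifferentiableAt ℝ g x) (i : Fin 2) :
    pd i (fun y => f y - g y) x = pd i f x - pd i g x := by
  simp [pd, fderiv_fun_sub hf hg]

lemma pd_proj {w : (Fin 2 → ℝ) → (Fin 2 → ℝ)} (hw : Differentiable ℝ w)
    (i j : Fin 2) (x : Fin 2 → ℝ) :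
    pd i (fun y => w y j) x = fderiv ℝ w x (Pi.single i 1) j := by
  unfold pd
  have h := (ContinuousLinearMap.proj (R := ℝ) (φ := fun _ : Fin 2 => ℝ) j).hasFDerivAt.comp x
    (hw x).hasFDerivAt
  rw [show (fun y => w y j) = (ContinuousLinearMap.proj (R := ℝ) (φ := fun _ : Fin 2 => ℝ) j)
    ∘ w from rfl, h.fderiv]
  rfl

lemma fderiv_translate {E F : Type*} [NormedAddCommGroup E] [NormedSpace ℝ E]
    [NormedAddCommGroup F] [NormedSpace ℝ F]
    {f : E → F} (hf : Differentiable ℝ f) (c : E) (hp : ∀ x, f (x + c) = f x) (x : E) :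
    fderiv ℝ f (x + c) = fderiv ℝ f x := by
  have h1 : HasFDerivAt (fun y => f (y + c)) (fderiv ℝ f (x + c)) x := by
    have := (hf (x + c)).hasFDerivAt.comp x ((hasFDerivAt_id x).add_const c)
    simpa [Function.comp_def] using this
  have h2 : (fun y => f (y + c)) = f := funext hp
  rw [h2] at h1
  exact h1.fderiv.symm

lemma pd_periodic {f : (Fin 2 → ℝ) → ℝ} (hf : ContDiff ℝ (⊤ : ℕ∞) f)
    (hp : ∀ x (j : Fin 2), f (x + Pi.single j (2 * Real.pi)) = f x)
    (i : Fin 2) : ∀ x (j : Fin 2), pd i f (x + Pi.single j (2 * Real.pi)) = pd i f x := by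
  intro x j
  unfold pd
  rw [fderiv_translate (hf.differentiable (by simp)) _ (fun y => hp y j) x]

lemma insertNth_add_single (i : Fin 2) (c : ℝ) (x : Fin 1 → ℝ) :
    (Fin.insertNth (α := fun _ : Fin 2 => ℝ) i c x)
      = Fin.insertNth (α := fun _ : Fin 2 => ℝ) i 0 x + Pi.single i c := by
  funext j
  refine Fin.succAboveCases i ?_ ?_ j
  · simp
  · intro k
    simp [Pi.single_eq_of_ne (Fin.succAbove_ne i k)]

/-- Integral of a divergence of a smooth periodic vector field over the box vanishes. -/
lemma integral_pd_sum_zero (G : Fin 2 → (Fin 2 → ℝ) → ℝ)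
    (hG : ∀ i, ContDiff ℝ (⊤ : ℕ∞) (G i))
    (hp : ∀ i x (j : Fin 2), G i (x + Pi.single j (2 * Real.pi)) = G i x) :
    ∫ x in T2, ∑ i : Fin 2, pd i (G i) x = 0 := by
  have hle : (0 : Fin 2 → ℝ) ≤ fun _ => 2 * Real.pi := fun i => by positivity
  have key := MeasureTheory.integral_divergence_of_hasFDerivAt_off_countable'
    (n := 1) (a := 0) (b := fun _ => 2 * Real.pi) hle G (fun i x => fderiv ℝ (G i) x) ∅
    countable_empty (fun i => (hG i).continuous.continuousOn)
    (fun x _ i => ((hG i).differentiable (by simp) x).hasFDerivAt)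
    (by
      apply ContinuousOn.integrableOn_compact isCompact_Icc
      exact (continuous_finset_sum _ fun i _ =>
        (contDiff_pd (hG i) i).continuous).continuousOn)
  have hface : ∀ i : Fin 2, ∀ x : Fin 1 → ℝ,
      G i (Fin.insertNth (α := fun _ : Fin 2 => ℝ) i ((fun _ => 2 * Real.pi : Fin 2 → ℝ) i) x)
        = G i (Fin.insertNth (α := fun _ : Fin 2 => ℝ) i ((0 : Fin 2 → ℝ) i) x) := by
    intro i x
    have h1 : Fin.insertNth (α := fun _ : Fin 2 => ℝ) i ((fun _ => 2 * Real.pi : Fin 2 → ℝ) i) x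
        = Fin.insertNth (α := fun _ : Fin 2 => ℝ) i 0 x + Pi.single i (2 * Real.pi) :=
      insertNth_add_single i _ x
    have h2 : Fin.insertNth (α := fun _ : Fin 2 => ℝ) i ((0 : Fin 2 → ℝ) i) x
        = Fin.insertNth (α := fun _ : Fin 2 => ℝ) i 0 x := by
      norm_num
    rw [h1, h2, hp]
  have hT : T2 = Set.Icc (0 : Fin 2 → ℝ) (fun _ => 2 * Real.pi) := rfl
  rw [hT]
  unfold pd
  rw [key]
  apply Finset.sum_eq_zero
  intro i _
  rw [sub_eq_zero]
  exact setIntegral_congr_fun measurableSet_Icc (fun x _ => hface i x) |>.symm ▸ rfl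

/-- Differentiation under the integral sign over the box, for smooth integrands. -/
lemma hasDerivAt_setIntegral (f : ℝ → (Fin 2 → ℝ) → ℝ)
    (hf : ContDiff ℝ (⊤ : ℕ∞) (fun p : ℝ × (Fin 2 → ℝ) => f p.1 p.2)) (t : ℝ) :
    HasDerivAt (fun s => ∫ x in T2, f s x)
      (∫ x in T2, deriv (fun s => f s x) t) t := by
  set F := fun p : ℝ × (Fin 2 → ℝ) => f p.1 p.2 with hF
  set F' := fun (s : ℝ) (x : Fin 2 → ℝ) => fderiv ℝ F (s, x) (1, 0) with hF'
  have hD : ∀ (s : ℝ) (x : Fin 2 → ℝ), HasDerivAt (fun u => f u x) (F' s x) s := by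
    intro s x
    have h1 : HasDerivAt (fun u : ℝ => (u, x)) ((1 : ℝ), (0 : Fin 2 → ℝ)) s :=
      (hasDerivAt_id s).prodMk (hasDerivAt_const s x)
    have h2 := ((hf.differentiable (by simp)) (s, x)).hasFDerivAt
    exact h2.comp_hasDerivAt s h1
  have hF'c : Continuous fun p : ℝ × (Fin 2 → ℝ) => F' p.1 p.2 := by
    have := (hf.fderiv_right (m := (⊤ : ℕ∞)) (by simp)).continuous
    exact (this.clm_apply continuous_const)
  obtain ⟨C, hC⟩ := (IsCompact.exists_bound_of_continuousOn
    ((isCompact_Icc (a := t - 1) (b := t + 1)).prod T2_compact) hF'c.continuousOn)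
  have key := hasDerivAt_integral_of_dominated_loc_of_deriv_le
    (μ := volume.restrict T2) (F := fun s x => f s x) (F' := F') (x₀ := t)
    (bound := fun _ => C) (Metric.ball_mem_nhds t one_pos)
    (Filter.Eventually.of_forall fun s =>
      (hf.continuous.comp (Continuous.prodMk_right s)).aestronglyMeasurable)
    (((hf.continuous.comp (Continuous.prodMk_right t)).continuousOn.integrableOn_compact
      T2_compact))
    ((hF'c.comp (Continuous.prodMk_right t)).aestronglyMeasurable)
    (by
      rw [ae_restrict_iff' T2_meas]
      refine Filter.Eventually.of_forall fun x hx => fun s hs => ?_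
      refine hC (s, x) ⟨?_, hx⟩
      have : |s - t| < 1 := by rw [← Real.dist_eq]; exact hs
      constructor <;> [linarith [abs_le.1 this.le |>.1]; linarith [abs_le.1 this.le |>.2]])
    (by
      refine integrable_const_iff.2 (Or.inr ?_)
      exact isFiniteMeasure_restrict.2 T2_compact.measure_lt_top.ne)
    (Filter.Eventually.of_forall fun x => fun s _ => hD s x)
  have heq : ∀ x, F' t x = deriv (fun s => f s x) t := fun x => (hD t x).deriv.symm
  have h2 := key.2
  simpa [heq] using h2

/-- The flux vector field whose divergence controls the energy. -/
def Gfun (D zi : ℝ) (a b c : (Fin 2 → ℝ) → ℝ) (w : (Fin 2 → ℝ) → (Fin 2 → ℝ))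
    (i : Fin 2) : (Fin 2 → ℝ) → ℝ :=
  fun y => 2 * D * (a y * pd i a y) + 2 * D * (b y * pd i b y)
    + 2 * D * (a y * b y * pd i c y) - zi * ((a y * a y + b y * b y) * w y i)

lemma contDiff_Gfun (D zi : ℝ) {a b c : (Fin 2 → ℝ) → ℝ}
    {w : (Fin 2 → ℝ) → (Fin 2 → ℝ)}
    (ha : ContDiff ℝ (⊤ : ℕ∞) a) (hb : ContDiff ℝ (⊤ : ℕ∞) b) (hc : ContDiff ℝ (⊤ : ℕ∞) c)
    (hw : ContDiff ℝ (⊤ : ℕ∞) w) (i : Fin 2) : ContDiff ℝ (⊤ : ℕ∞) (Gfun D zi a b c w i) := by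
  have hwi : ContDiff ℝ (⊤ : ℕ∞) (fun y => w y i) :=
    (ContinuousLinearMap.proj (R := ℝ) (φ := fun _ : Fin 2 => ℝ) i).contDiff.comp hw
  unfold Gfun
  exact (((contDiff_const.mul (ha.mul (contDiff_pd ha i))).add
    (contDiff_const.mul (hb.mul (contDiff_pd hb i)))).add
    (contDiff_const.mul ((ha.mul hb).mul (contDiff_pd hc i)))).sub
    (contDiff_const.mul (((ha.mul ha).add (hb.mul hb)).mul hwi))

lemma Gfun_periodic (D zi : ℝ) {a b c : (Fin 2 → ℝ) → ℝ}
    {w : (Fin 2 → ℝ) → (Fin 2 → ℝ)}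
    (ha : ContDiff ℝ (⊤ : ℕ∞) a) (hb : ContDiff ℝ (⊤ : ℕ∞) b) (hc : ContDiff ℝ (⊤ : ℕ∞) c)
    (hap : ∀ x (j : Fin 2), a (x + Pi.single j (2 * Real.pi)) = a x)
    (hbp : ∀ x (j : Fin 2), b (x + Pi.single j (2 * Real.pi)) = b x)
    (hcp : ∀ x (j : Fin 2), c (x + Pi.single j (2 * Real.pi)) = c x)
    (hwp : ∀ x (j : Fin 2), w (x + Pi.single j (2 * Real.pi)) = w x)
    (i : Fin 2) : ∀ x (j : Fin 2),
      Gfun D zi a b c w i (x + Pi.single j (2 * Real.pi)) = Gfun D zi a b c w i x := by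
  intro x j
  unfold Gfun
  rw [hap, hbp, pd_periodic ha hap i, pd_periodic hb hbp i, pd_periodic hc hcp i, hwp]

lemma pd_Gfun (D zi : ℝ) {a b c : (Fin 2 → ℝ) → ℝ} {w : (Fin 2 → ℝ) → (Fin 2 → ℝ)}
    (ha : ContDiff ℝ (⊤ : ℕ∞) a) (hb : ContDiff ℝ (⊤ : ℕ∞) b) (hc : ContDiff ℝ (⊤ : ℕ∞) c)
    (hw : ContDiff ℝ (⊤ : ℕ∞) w) (i : Fin 2) (x : Fin 2 → ℝ) :
    pd i (Gfun D zi a b c w i) x =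
      2 * D * (pd i a x * pd i a x + a x * pd2 i a x)
      + 2 * D * (pd i b x * pd i b x + b x * pd2 i b x)
      + 2 * D * ((pd i a x * b x + a x * pd i b x) * pd i c x + a x * b x * pd2 i c x)
      - zi * ((pd i a x * a x + a x * pd i a x + (pd i b x * b x + b x * pd i b x)) * w x i
          + (a x * a x + b x * b x) * fderiv ℝ w x (Pi.single i 1) i) := by
  have Da : DifferentiableAt ℝ a x := (ha.differentiable (by simp)).differentiableAt
  have Db : DifferentiableAt ℝ b x := (hb.differentiable (by simp)).differentiableAt
  have Dpa : DifferentiableAt ℝ (pd i a) x :=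
    ((contDiff_pd ha i).differentiable (by simp)).differentiableAt
  have Dpb : DifferentiableAt ℝ (pd i b) x :=
    ((contDiff_pd hb i).differentiable (by simp)).differentiableAt
  have Dpc : DifferentiableAt ℝ (pd i c) x :=
    ((contDiff_pd hc i).differentiable (by simp)).differentiableAt
  have Dwi : DifferentiableAt ℝ (fun y => w y i) x :=
    (((ContinuousLinearMap.proj (R := ℝ) (φ := fun _ : Fin 2 => ℝ) i).contDiff.comp
      hw).differentiable (by simp)).differentiableAt
  have D1 : DifferentiableAt ℝ (fun y => 2 * D * (a y * pd i a y)) x :=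
    (differentiableAt_const _).mul (Da.mul Dpa)
  have D2 : DifferentiableAt ℝ (fun y => 2 * D * (b y * pd i b y)) x :=
    (differentiableAt_const _).mul (Db.mul Dpb)
  have D3 : DifferentiableAt ℝ (fun y => 2 * D * (a y * b y * pd i c y)) x :=
    (differentiableAt_const _).mul ((Da.mul Db).mul Dpc)
  have D4 : DifferentiableAt ℝ (fun y => (a y * a y + b y * b y) * w y i) x :=
    ((Da.mul Da).add (Db.mul Db)).mul Dwi
  unfold Gfun
  rw [pd_sub ((D1.fun_add D2).fun_add D3) ((differentiableAt_const _).fun_mul D4),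
    pd_add (D1.fun_add D2) D3, pd_add D1 D2,
    pd_const_mul (Da.fun_mul Dpa), pd_const_mul (Db.fun_mul Dpb),
    pd_const_mul ((Da.fun_mul Db).fun_mul Dpc), pd_const_mul D4,
    pd_mul Da Dpa, pd_mul Db Dpb, pd_mul (Da.fun_mul Db) Dpc, pd_mul Da Db,
    pd_mul ((Da.fun_mul Da).fun_add (Db.fun_mul Db)) Dwi,
    pd_add (Da.fun_mul Da) (Db.fun_mul Db), pd_mul Da Da, pd_mul Db Db,
    pd_proj (hw.differentiable (by simp)), pd2_eq, pd2_eq, pd2_eq]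

lemma pointwise_identity (D ε₀ zi : ℝ) (hε₀ : ε₀ ≠ 0)
    {a b c : (Fin 2 → ℝ) → ℝ} {w : (Fin 2 → ℝ) → (Fin 2 → ℝ)}
    (ha : ContDiff ℝ (⊤ : ℕ∞) a) (hb : ContDiff ℝ (⊤ : ℕ∞) b) (hc : ContDiff ℝ (⊤ : ℕ∞) c)
    (hw : ContDiff ℝ (⊤ : ℕ∞) w) (x : Fin 2 → ℝ)
    (hdiv : ∑ i : Fin 2, fderiv ℝ w x (Pi.single i 1) i = 0)
    (hpois : -ε₀ * ∑ i : Fin 2, pd2 i c x = b x)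
    (da db : ℝ)
    (heqa : da + zi * ∑ i : Fin 2, w x i * pd i a x =
      D * ∑ i : Fin 2, pd2 i a x + D * ∑ i : Fin 2, pd i (fun y => b y * pd i c y) x)
    (heqb : db + zi * ∑ i : Fin 2, w x i * pd i b x =
      D * ∑ i : Fin 2, pd2 i b x + D * ∑ i : Fin 2, pd i (fun y => a y * pd i c y) x) :
    2 * a x * da + 2 * b x * db =
      (∑ i : Fin 2, pd i (Gfun D zi a b c w i) x)
      - 2 * D * ((∑ i : Fin 2, (pd i a x) ^ 2) + ∑ i : Fin 2, (pd i b x) ^ 2)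
      - 2 * D / ε₀ * (a x * (b x) ^ 2) := by
  have Da : DifferentiableAt ℝ a x := (ha.differentiable (by simp)).differentiableAt
  have Db : DifferentiableAt ℝ b x := (hb.differentiable (by simp)).differentiableAt
  have Dpc : ∀ i : Fin 2, DifferentiableAt ℝ (pd i c) x := fun i =>
    ((contDiff_pd hc i).differentiable (by simp)).differentiableAt
  simp only [Fin.sum_univ_two, pd_Gfun D zi ha hb hc hw,
    pd_mul Db (Dpc 0), pd_mul Db (Dpc 1), pd_mul Da (Dpc 0), pd_mul Da (Dpc 1),
    pd2_eq] at *
  have hS : pd2 0 c x + pd2 1 c x = -(b x) / ε₀ := by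
    field_simp
    linarith [hpois]
  linear_combination (2 * a x) * heqa + (2 * b x) * heqb
    + (2 * D * a x * b x) * hS + (zi * (a x * a x + b x * b x)) * hdiv

end NPaux

open NPaux

/-- Energy dissipation inequality for the transformed Nernst–Planck system
(Lemma 5.1 of the paper). -/
theorem nernst_planck_energy_dissipation
    (D ε₀ t₀ T : ℝ) (hD : 0 < D) (hε₀ : 0 < ε₀)
    (z : ℝ → ℝ) (hzpos : ∀ t, 0 < z t) (hzc : Continuous z)
    (v : ℝ → (Fin 2 → ℝ) → (Fin 2 → ℝ))
    (σ ρ Φ : ℝ → (Fin 2 → ℝ) → ℝ)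
    -- smoothness of the solution in (t,x)
    (hv : ContDiff ℝ (⊤ : ℕ∞) (fun p : ℝ × (Fin 2 → ℝ) => v p.1 p.2))
    (hσ : ContDiff ℝ (⊤ : ℕ∞) (fun p : ℝ × (Fin 2 → ℝ) => σ p.1 p.2))
    (hρ : ContDiff ℝ (⊤ : ℕ∞) (fun p : ℝ × (Fin 2 → ℝ) => ρ p.1 p.2))
    (hΦ : ContDiff ℝ (⊤ : ℕ∞) (fun p : ℝ × (Fin 2 → ℝ) => Φ p.1 p.2))
    -- spatial periodicity
    (hvp : ∀ t x (i : Fin 2), v t (x + Pi.single i (2 * Real.pi)) = v t x)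
    (hσp : ∀ t x (i : Fin 2), σ t (x + Pi.single i (2 * Real.pi)) = σ t x)
    (hρp : ∀ t x (i : Fin 2), ρ t (x + Pi.single i (2 * Real.pi)) = ρ t x)
    (hΦp : ∀ t x (i : Fin 2), Φ t (x + Pi.single i (2 * Real.pi)) = Φ t x)
    -- `v` is divergence-free
    (hdiv : ∀ t x, ∑ i : Fin 2, fderiv ℝ (v t) x (Pi.single i 1) i = 0)
    -- Poisson equation `-ε₀ ΔΦ = ρ`
    (hpoisson : ∀ t x, -ε₀ * ∑ i : Fin 2, pd2 i (Φ t) x = ρ t x)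
    -- nonnegativity of `σ`
    (hσ0 : ∀ t x, 0 ≤ σ t x)
    -- the Nernst–Planck equations for `σ` and `ρ`
    (heqσ : ∀ t ∈ Set.Icc t₀ T, ∀ x,
      deriv (fun s => σ s x) t + (z t)⁻¹ * ∑ i : Fin 2, v t x i * pd i (σ t) x =
        D * ∑ i : Fin 2, pd2 i (σ t) x +
          D * ∑ i : Fin 2, pd i (fun y => ρ t y * pd i (Φ t) y) x)
    (heqρ : ∀ t ∈ Set.Icc t₀ T, ∀ x,
      deriv (fun s => ρ s x) t + (z t)⁻¹ * ∑ i : Fin 2, v t x i * pd i (ρ t) x =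
        D * ∑ i : Fin 2, pd2 i (ρ t) x +
          D * ∑ i : Fin 2, pd i (fun y => σ t y * pd i (Φ t) y) x) :
    ∀ t ∈ Set.Icc t₀ T,
      deriv (fun s => ∫ x in T2, ((σ s x) ^ 2 + (ρ s x) ^ 2)) t +
        2 * D * ∫ x in T2,
          ((∑ i : Fin 2, (pd i (σ t) x) ^ 2) + ∑ i : Fin 2, (pd i (ρ t) x) ^ 2) ≤ 0 := by
  intro t ht
  -- spatial slices are smooth
  have ha : ContDiff ℝ (⊤ : ℕ∞) (σ t) := hσ.comp (contDiff_const.prodMk contDiff_id)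
  have hb : ContDiff ℝ (⊤ : ℕ∞) (ρ t) := hρ.comp (contDiff_const.prodMk contDiff_id)
  have hc : ContDiff ℝ (⊤ : ℕ∞) (Φ t) := hΦ.comp (contDiff_const.prodMk contDiff_id)
  have hw : ContDiff ℝ (⊤ : ℕ∞) (v t) := hv.comp (contDiff_const.prodMk contDiff_id)
  set zi := (z t)⁻¹ with hzi
  set G := Gfun D zi (σ t) (ρ t) (Φ t) (v t) with hGdef
  -- time derivative of the squared integrand
  have hts : ∀ x, DifferentiableAt ℝ (fun s => σ s x) t := fun x =>
    ((hσ.comp (contDiff_id.prodMk contDiff_const)).differentiable (by simp)).differentiableAt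
  have htr : ∀ x, DifferentiableAt ℝ (fun s => ρ s x) t := fun x =>
    ((hρ.comp (contDiff_id.prodMk contDiff_const)).differentiable (by simp)).differentiableAt
  have hptw : ∀ x, deriv (fun s => σ s x ^ 2 + ρ s x ^ 2) t =
      (∑ i : Fin 2, pd i (G i) x)
      - 2 * D * ((∑ i : Fin 2, (pd i (σ t) x) ^ 2) + ∑ i : Fin 2, (pd i (ρ t) x) ^ 2)
      - 2 * D / ε₀ * (σ t x * (ρ t x) ^ 2) := by
    intro x
    have h1 : HasDerivAt (fun s => σ s x ^ 2 + ρ s x ^ 2)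
        (2 * σ t x * deriv (fun s => σ s x) t + 2 * ρ t x * deriv (fun s => ρ s x) t) t := by
      have hσd := ((hts x).hasDerivAt.fun_pow 2)
      have hρd := ((htr x).hasDerivAt.fun_pow 2)
      have := hσd.fun_add hρd
      refine this.congr_deriv ?_
      push_cast
      ring
    rw [h1.deriv, hGdef]
    exact pointwise_identity D ε₀ zi (ne_of_gt hε₀) ha hb hc hw x (hdiv t x)
      (hpoisson t x) _ _ (heqσ t ht x) (heqρ t ht x)
  -- differentiate under the integral
  have hder := hasDerivAt_setIntegral (fun s x => σ s x ^ 2 + ρ s x ^ 2)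
    ((hσ.pow 2).add (hρ.pow 2)) t
  have hderE : deriv (fun s => ∫ x in T2, ((σ s x) ^ 2 + (ρ s x) ^ 2)) t =
      ∫ x in T2, deriv (fun s => σ s x ^ 2 + ρ s x ^ 2) t := hder.deriv
  -- integrability of all the pieces
  have hGi : ∀ i : Fin 2, ContDiff ℝ (⊤ : ℕ∞) (G i) := fun i => contDiff_Gfun D zi ha hb hc hw i
  have int1 : IntegrableOn (fun x => ∑ i : Fin 2, pd i (G i) x) T2 := by
    apply ContinuousOn.integrableOn_compact T2_compact
    exact (continuous_finset_sum _ fun i _ => (contDiff_pd (hGi i) i).continuous).continuousOn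
  have int2 : IntegrableOn (fun x => 2 * D *
      ((∑ i : Fin 2, (pd i (σ t) x) ^ 2) + ∑ i : Fin 2, (pd i (ρ t) x) ^ 2)) T2 := by
    apply ContinuousOn.integrableOn_compact T2_compact
    refine (continuous_const.mul (Continuous.add ?_ ?_)).continuousOn <;>
      exact continuous_finset_sum _ fun i _ => ((contDiff_pd (by assumption) i).continuous).pow 2
  have int3 : IntegrableOn (fun x => 2 * D / ε₀ * (σ t x * (ρ t x) ^ 2)) T2 := by
    apply ContinuousOn.integrableOn_compact T2_compact
    exact (continuous_const.mul (ha.continuous.mul (hb.continuous.pow 2))).continuousOn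
  -- the divergence integrates to zero
  have hGzero : ∫ x in T2, ∑ i : Fin 2, pd i (G i) x = 0 := by
    apply integral_pd_sum_zero G hGi
    intro i x j
    exact Gfun_periodic D zi ha hb hc (fun x j => hσp t x j) (fun x j => hρp t x j)
      (fun x j => hΦp t x j) (fun x j => hvp t x j) i x j
  -- assemble
  have hsplit : (∫ x in T2, deriv (fun s => σ s x ^ 2 + ρ s x ^ 2) t) =
      (∫ x in T2, ∑ i : Fin 2, pd i (G i) x)
      - (∫ x in T2, 2 * D *
          ((∑ i : Fin 2, (pd i (σ t) x) ^ 2) + ∑ i : Fin 2, (pd i (ρ t) x) ^ 2))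
      - ∫ x in T2, 2 * D / ε₀ * (σ t x * (ρ t x) ^ 2) := by
    have hcongr : (∫ x in T2, deriv (fun s => σ s x ^ 2 + ρ s x ^ 2) t) =
        ∫ x in T2, ((∑ i : Fin 2, pd i (G i) x
          - 2 * D * ((∑ i : Fin 2, (pd i (σ t) x) ^ 2) + ∑ i : Fin 2, (pd i (ρ t) x) ^ 2))
          - 2 * D / ε₀ * (σ t x * (ρ t x) ^ 2)) :=
      setIntegral_congr_fun T2_meas fun x _ => by simpa using hptw x
    have int12 : IntegrableOn (fun x => ∑ i : Fin 2, pd i (G i) x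
        - 2 * D * ((∑ i : Fin 2, (pd i (σ t) x) ^ 2) + ∑ i : Fin 2, (pd i (ρ t) x) ^ 2))
        T2 := int1.sub int2
    rw [hcongr, integral_sub int12 int3, integral_sub int1 int2]
  have hpull : (∫ x in T2, 2 * D *
      ((∑ i : Fin 2, (pd i (σ t) x) ^ 2) + ∑ i : Fin 2, (pd i (ρ t) x) ^ 2)) =
      2 * D * ∫ x in T2,
        ((∑ i : Fin 2, (pd i (σ t) x) ^ 2) + ∑ i : Fin 2, (pd i (ρ t) x) ^ 2) :=
    integral_const_mul _ _
  have hnn : 0 ≤ ∫ x in T2, 2 * D / ε₀ * (σ t x * (ρ t x) ^ 2) := by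
    refine setIntegral_nonneg T2_meas fun x _ => ?_
    have := hσ0 t x
    positivity
  rw [hderE, hsplit, hGzero, hpull]
  linarith

end
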